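/- arXiv:1203.0987 — 4 statements merged into one kernel-verified Lean document; each statement's English description precedes it below -/
import Mathlib

section
/- Let n ≥ 4 and B = ZMod n. Every additive relation R ⊆ B × B × B of two variables over B can be represented as a superposition of additive relations of one variable: there exist L ∈ ℕ and unary relations f_i, g_i, h_i ⊆ B × B (for i = 1, …, L) such that R equals the sum over i of the superposition terms h_i⟨f_i, g_i⟩. -/
/-- The sum of a finite family of additive relations of two variables over an
additive commutative monoid: `(x, y, v)` belongs to the sum iff one can choose
a value `v i` of each relation at `(x, y)` with `v = ∑ i, v i`.  (This is the
iterated binary sum `R₁ + R₂ = {(x, y, v₁ + v₂) | (x,y,v₁) ∈ R₁, (x,y,v₂) ∈ R₂}`.) -/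
def relSum {B : Type*} [AddCommMonoid B] {ι : Type*} [Fintype ι]
    (f : ι → Set (B × B × B)) : Set (B × B × B) :=
  {q | ∃ v : ι → B, (∀ i, (q.1, q.2.1, v i) ∈ f i) ∧ q.2.2 = ∑ i, v i}

/-- The superposition term `h⟨f, g⟩`, representing `(x, y) ↦ h (f x + g y)` for
unary relations `f`, `g`, `h`. -/
def supTerm {B : Type*} [AddCommMonoid B] (h f g : Set (B × B)) :
    Set (B × B × B) :=
  {q | ∃ u w, (q.1, u) ∈ f ∧ (q.2.1, w) ∈ g ∧ (u + w, q.2.2) ∈ h}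

/-- Over `ZMod n` with `n ≥ 4`, every additive relation of two variables can be
represented as a superposition of additive relations of one variable. -/
theorem relation_superposition (n : ℕ) (hn : 4 ≤ n)
    (R : Set (ZMod n × ZMod n × ZMod n)) :
    ∃ (L : ℕ) (f g h : Fin L → Set (ZMod n × ZMod n)),
      R = relSum (fun i => supTerm (h i) (f i) (g i)) := by
  haveI : NeZero n := ⟨by omega⟩
  have hone : (1 : ZMod n) ≠ 0 := by
    intro h
    have := (ZMod.natCast_eq_zero_iff 1 n).mp (by exact_mod_cast h)
    have := Nat.le_of_dvd one_pos this
    omega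
  have htwo : (1 + 1 : ZMod n) ≠ 0 := by
    intro h
    have h2 : ((2 : ℕ) : ZMod n) = 0 := by push_cast; linear_combination h
    have := (ZMod.natCast_eq_zero_iff 2 n).mp h2
    have := Nat.le_of_dvd two_pos this
    omega
  have hcard : Fintype.card (ZMod n × ZMod n) = n * n := by
    simp [ZMod.card]
  let e : (ZMod n × ZMod n) ≃ Fin (n * n) := Fintype.equivFinOfCardEq hcard
  refine ⟨n * n,
    fun i => {p | p.2 = if p.1 = (e.symm i).1 then 0 else 1},
    fun i => {p | p.2 = if p.1 = (e.symm i).2 then 0 else 1},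
    fun i => {p | if p.1 = 0 then ((e.symm i).1, (e.symm i).2, p.2) ∈ R else p.2 = 0},
    ?_⟩
  have key : ∀ (x y : ZMod n) (i : Fin (n * n)),
      ((if x = (e.symm i).1 then (0 : ZMod n) else 1)
        + (if y = (e.symm i).2 then 0 else 1)) = 0 ↔ e.symm i = (x, y) := by
    intro x y i
    by_cases hx : x = (e.symm i).1 <;> by_cases hy : y = (e.symm i).2 <;>
      simp [hx, hy, hone, htwo, Prod.ext_iff] <;> tauto
  ext ⟨x, y, v⟩
  constructor
  · intro hv
    refine ⟨fun i => if e.symm i = (x, y) then v else 0, ?_, ?_⟩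
    · intro i
      refine ⟨(if x = (e.symm i).1 then 0 else 1), (if y = (e.symm i).2 then 0 else 1),
        ?_, ?_, ?_⟩
      · simp only [Set.mem_setOf_eq]
      · simp only [Set.mem_setOf_eq]
      by_cases hi : e.symm i = (x, y)
      · have : ((if x = (e.symm i).1 then (0 : ZMod n) else 1)
            + (if y = (e.symm i).2 then 0 else 1)) = 0 := (key x y i).mpr hi
        simp only [Set.mem_setOf_eq, this, if_pos rfl, if_pos hi]
        rw [hi]; exact hv
      · have hne : ((if x = (e.symm i).1 then (0 : ZMod n) else 1)
            + (if y = (e.symm i).2 then 0 else 1)) ≠ 0 :=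
          fun h => hi ((key x y i).mp h)
        simp [Set.mem_setOf_eq, hne, hi]
    · rw [Finset.sum_eq_single (e (x, y))]
      · simp
      · intro i _ hi
        rw [if_neg]
        intro h
        exact hi (by rw [← h]; simp)
      · simp
  · rintro ⟨w, hw, hsum⟩
    have hz : ∀ i, i ≠ e (x, y) → w i = 0 := by
      intro i hi
      obtain ⟨u, u', hu, hu', hh⟩ := hw i
      simp only [Set.mem_setOf_eq] at hu hu' hh
      rw [hu, hu'] at hh
      rw [if_neg] at hh
      · exact hh
      · rw [key x y i]
        intro h
        exact hi (by rw [← h]; simp)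
    have hsum' : v = ∑ i, w i := hsum
    have : v = w (e (x, y)) := by
      rw [hsum', Finset.sum_eq_single (e (x, y))]
      · intro i _ hi; exact hz i hi
      · simp
    rw [this]
    obtain ⟨u, u', hu, hu', hh⟩ := hw (e (x, y))
    simp only [Set.mem_setOf_eq] at hu hu' hh
    rw [hu, hu'] at hh
    rw [if_pos ((key x y _).mpr (by simp))] at hh
    simpa using hh
end

section
/- Let n ≥ 4 and B = ZMod n. Every function F : B × B → B can be represented as a superposition of functions of one variable and addition: there exist L ∈ ℕ and functions f_i, g_i, h_i : B → B (for i = 1, …, L) such that for all x, y ∈ B, F(x, y) = Σ_{i=1}^{L} h_i(f_i(x) + g_i(y)). -/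
/-- Over `ZMod n` with `n ≥ 4`, every function of two variables can be
represented as a superposition of functions of one variable and addition:
`F (x, y) = ∑ i, h i (f i x + g i y)`. -/
theorem function_superposition_two (n : ℕ) (hn : 4 ≤ n)
    (F : ZMod n × ZMod n → ZMod n) :
    ∃ (L : ℕ) (f g h : Fin L → ZMod n → ZMod n),
      ∀ x y : ZMod n, F (x, y) = ∑ i, h i (f i x + g i y) := by
  haveI : NeZero n := ⟨by omega⟩
  have hinj : ∀ a b : ℕ, a < 4 → b < 4 → ((a : ZMod n) = (b : ZMod n)) → a = b := by
    intro a b ha hb h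
    have := congrArg ZMod.val h
    rwa [ZMod.val_natCast_of_lt (by omega), ZMod.val_natCast_of_lt (by omega)] at this
  have h30 : (3 : ZMod n) ≠ 0 := fun h => by
    have := hinj 3 0 (by norm_num) (by norm_num) (by push_cast; exact h); omega
  have h31 : (3 : ZMod n) ≠ 1 := fun h => by
    have := hinj 3 1 (by norm_num) (by norm_num) (by push_cast; exact h); omega
  have h32 : (3 : ZMod n) ≠ 2 := fun h => by
    have := hinj 3 2 (by norm_num) (by norm_num) (by push_cast; exact h); omega
  set L := Fintype.card (ZMod n × ZMod n) with hL
  set e := (Fintype.equivFin (ZMod n × ZMod n)).symm with he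
  refine ⟨L,
    fun i x => if x = (e i).1 then 1 else 0,
    fun i y => if y = (e i).2 then 2 else 0,
    fun i z => if z = 3 then F (e i) else 0, ?_⟩
  intro x y
  have key : ∀ i : Fin L,
      (if ((if x = (e i).1 then (1:ZMod n) else 0) +
        (if y = (e i).2 then (2:ZMod n) else 0)) = 3 then F (e i) else 0)
      = if e i = (x, y) then F (x, y) else 0 := by
    intro i
    by_cases hx : x = (e i).1 <;> by_cases hy : y = (e i).2
    · have hxy : e i = (x, y) := by rw [Prod.ext_iff]; exact ⟨hx.symm, hy.symm⟩
      rw [if_pos hx, if_pos hy, if_pos (by norm_num), if_pos hxy, hxy]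
    · have hxy : e i ≠ (x, y) := fun h => hy (by rw [h])
      rw [if_pos hx, if_neg hy, if_neg (show ¬((1:ZMod n) + 0 = 3) from by
        rw [add_zero]; exact fun h => h31 h.symm), if_neg hxy]
    · have hxy : e i ≠ (x, y) := fun h => hx (by rw [h])
      rw [if_neg hx, if_pos hy, if_neg (show ¬((0:ZMod n) + 2 = 3) from by
        rw [zero_add]; exact fun h => h32 h.symm), if_neg hxy]
    · have hxy : e i ≠ (x, y) := fun h => hx (by rw [h])
      rw [if_neg hx, if_neg hy, if_neg (show ¬((0:ZMod n) + 0 = 3) from by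
        rw [add_zero]; exact fun h => h30 h.symm), if_neg hxy]
  calc F (x, y) = ∑ i : Fin L, if e i = (x, y) then F (x, y) else 0 := by
        rw [Fintype.sum_equiv e (fun i => if e i = (x, y) then F (x, y) else 0)
          (fun p => if p = (x, y) then F (x, y) else 0) (fun i => rfl)]
        simp
    _ = _ := by
        refine Finset.sum_congr rfl fun i _ => ?_
        exact (key i).symm
end

section
/- Let n ≥ 4 and B = ZMod n. Every function F : B × B × B → B can be represented as a superposition of functions of one variable and addition in the nested form: there exist L ∈ ℕ and functions f_i, h_i, g_{i1}, g_{i2}, g_{i3} : B → B (for i = 1, …, L) such that for all x, y, z ∈ B, F(x, y, z) = Σ_{i=1}^{L} f_i( h_i( g_{i1}(x) + g_{i2}(y) ) + g_{i3}(z) ). -/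
/-- Over `ZMod n` with `n ≥ 4`, every function of three variables can be
represented as a nested superposition of functions of one variable and addition:
`F (x, y, z) = ∑ i, f i (h i (g₁ i x + g₂ i y) + g₃ i z)`. -/
theorem function_superposition_three (n : ℕ) (hn : 4 ≤ n)
    (F : ZMod n × ZMod n × ZMod n → ZMod n) :
    ∃ (L : ℕ) (f h g₁ g₂ g₃ : Fin L → ZMod n → ZMod n),
      ∀ x y z : ZMod n,
        F (x, y, z) = ∑ i, f i (h i (g₁ i x + g₂ i y) + g₃ i z) := by
  haveI : NeZero n := ⟨by omega⟩
  have h2 : ((2 : ZMod n)) = ((2 : ℕ) : ZMod n) := by push_cast; ring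
  have h2ne0 : (2 : ZMod n) ≠ 0 := by
    intro hc
    apply_fun ZMod.val at hc
    rw [h2, ZMod.val_cast_of_lt (show 2 < n by omega)] at hc
    simp at hc
  have h2ne1 : (2 : ZMod n) ≠ 1 := by
    intro hc
    apply_fun ZMod.val at hc
    rw [h2, ZMod.val_cast_of_lt (show 2 < n by omega),
      show ((1 : ZMod n)) = ((1 : ℕ) : ZMod n) by push_cast; ring,
      ZMod.val_cast_of_lt (show 1 < n by omega)] at hc
    simp at hc
  have n12 : (1 : ZMod n) ≠ 2 := fun hc => h2ne1 hc.symm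
  have n02 : (0 : ZMod n) ≠ 2 := fun hc => h2ne0 hc.symm
  have e11 : (1 : ZMod n) + 1 = 2 := one_add_one_eq_two
  set L := Fintype.card (ZMod n × ZMod n × ZMod n) with hL
  set σ : Fin L ≃ (ZMod n × ZMod n × ZMod n) :=
    (Fintype.equivFin (ZMod n × ZMod n × ZMod n)).symm with hσ
  refine ⟨L,
    fun i s => if s = 2 then F (σ i) else 0,
    fun i s => if s = 2 then 1 else 0,
    fun i x => if x = (σ i).1 then 1 else 0,
    fun i y => if y = (σ i).2.1 then 1 else 0,
    fun i z => if z = (σ i).2.2 then 1 else 0,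
    ?_⟩
  intro x y z
  have key : ∀ p : ZMod n × ZMod n × ZMod n,
      (if ((if ((if x = p.1 then (1 : ZMod n) else 0) + (if y = p.2.1 then (1 : ZMod n) else 0)) = 2
            then (1 : ZMod n) else 0) + (if z = p.2.2 then (1 : ZMod n) else 0)) = 2
        then F p else 0)
      = if (x, y, z) = p then F p else 0 := by
    intro p
    by_cases hx : x = p.1 <;> by_cases hy : y = p.2.1 <;> by_cases hz : z = p.2.2 <;>
      simp [hx, hy, hz, e11, n12, n02, Prod.ext_iff]
  calc F (x, y, z)
      = ∑ p : ZMod n × ZMod n × ZMod n, if (x, y, z) = p then F p else 0 := by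
        rw [Finset.sum_ite_eq]; simp
    _ = ∑ i : Fin L, if (x, y, z) = σ i then F (σ i) else 0 := by
        rw [← Equiv.sum_comp σ (fun p => if (x, y, z) = p then F p else 0)]
    _ = _ := by
        refine Finset.sum_congr rfl fun i _ => ?_
        exact (key (σ i)).symm
end

section
/- Let N ≥ 3 be an odd number and B = ZMod N. Every function F : B × B → B can be represented as a superposition of functions of one variable and addition using at most N + 1 terms: there exist functions f_i, g_i, h_i : B → B for i = 0, …, N such that for all x, y ∈ B, F(x, y) = Σ_{i=0}^{N} h_i(f_i(x) + g_i(y)). -/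
open Finset

lemma zmod_sum_range {N : ℕ} [NeZero N] (H : ZMod N → ZMod N) :
    ∑ j ∈ Finset.range N, H (j : ZMod N) = ∑ u, H u := by
  rw [← Fin.sum_univ_eq_sum_range (fun j => H ((j : ℕ) : ZMod N)) N]
  apply Function.Bijective.sum_comp (e := fun i : Fin N => ((i : ℕ) : ZMod N))
  rw [Fintype.bijective_iff_injective_and_card]
  refine ⟨fun a b hab => ?_, by simp [ZMod.card]⟩
  have := congrArg ZMod.val hab
  rw [ZMod.val_cast_of_lt a.isLt, ZMod.val_cast_of_lt b.isLt] at this; exact Fin.ext this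

lemma zmod_telescope {N : ℕ} [NeZero N] (H : ZMod N → ZMod N)
    (h0 : ∑ u, H u = 0) :
    ∃ h : ZMod N → ZMod N, ∀ u, h (u + 1) = h u + H u := by
  have hsum : ∑ j ∈ Finset.range N, H (j : ZMod N) = 0 := by
    rw [zmod_sum_range]; exact h0
  refine ⟨fun u => ∑ j ∈ Finset.range u.val, H (j : ZMod N), fun u => ?_⟩
  show ∑ j ∈ Finset.range (u + 1).val, H (j : ZMod N)
      = ∑ j ∈ Finset.range u.val, H (j : ZMod N) + H u
  have hvlt : u.val < N := ZMod.val_lt u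
  have hu : ((u.val : ℕ) : ZMod N) = u := by simp [ZMod.natCast_val, ZMod.cast_id]
  rcases eq_or_lt_of_le (Nat.succ_le_of_lt hvlt) with hcase | hcase
  · -- u.val + 1 = N, so u + 1 = 0
    have h1 : u + 1 = 0 := by
      rw [← hu, ← Nat.cast_one, ← Nat.cast_add]
      have : u.val + 1 = N := by omega
      rw [this, ZMod.natCast_self]
    rw [h1, ZMod.val_zero]
    simp only [Finset.range_zero, Finset.sum_empty]
    have h2 : ∑ j ∈ Finset.range u.val, H (j : ZMod N) + H u
        = ∑ j ∈ Finset.range (u.val + 1), H (j : ZMod N) := by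
      rw [Finset.sum_range_succ, hu]
    have h3 : u.val + 1 = N := by omega
    rw [h2, h3, hsum]
  · have h1 : (u + 1).val = u.val + 1 := by
      conv_lhs => rw [← hu, ← Nat.cast_one, ← Nat.cast_add]
      exact ZMod.val_cast_of_lt (by omega)
    rw [h1, Finset.sum_range_succ, hu]
open Finset
lemma zmod_factor {N : ℕ} [NeZero N] (hodd : Odd N) (r : ZMod N → ZMod N) :
    ∃ f H : ZMod N → ZMod N, (∑ u, H u = 0) ∧ ∀ x, H (f x) = r x := by
  by_cases hinj : Function.Injective r
  · refine ⟨id, r, ?_, fun x => rfl⟩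
    have hbij : Function.Bijective r := Finite.injective_iff_bijective.mp hinj
    have h1 : ∑ u, r u = ∑ u : ZMod N, u := hbij.sum_comp id
    have h2 : ∑ u : ZMod N, u = -∑ u : ZMod N, u := by
      rw [← Finset.sum_neg_distrib]
      exact Fintype.sum_equiv (Equiv.neg _) _ _ (fun x => (neg_neg x).symm)
    have h3 : (2 : ZMod N) * ∑ u : ZMod N, u = 0 := by
      rw [two_mul]
      nth_rewrite 1 [h2]
      ring
    have hu2 : IsUnit (2 : ZMod N) := by
      have := (ZMod.isUnit_iff_coprime 2 N).mpr (Nat.coprime_two_left.mpr hodd)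
      simpa using this
    rw [h1]
    exact (IsUnit.mul_right_eq_zero hu2).mp h3
  · rw [Function.Injective] at hinj
    push_neg at hinj
    obtain ⟨a, b, hrab, hne⟩ := hinj
    set T : ZMod N := ∑ x, r x with hT
    refine ⟨fun x => if x = b then a else x,
      fun u => if u = b then r b - T else r u, ?_, ?_⟩
    · have key : ∀ u : ZMod N, (if u = b then r b - T else r u)
          = r u + (if u = b then -T else 0) := by
        intro u
        by_cases h : u = b
        · subst h; simp [sub_eq_add_neg]
        · simp [h]
      rw [Finset.sum_congr rfl (fun u _ => key u), Finset.sum_add_distrib,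
        Finset.sum_ite_eq' Finset.univ b (fun _ => -T)]
      simp [hT]
    · intro x
      by_cases hx : x = b
      · subst hx; simp [hne, hrab]
      · simp [hx]

/-- Over `ZMod N` with `N ≥ 3` odd, every function of two variables can be
represented as a superposition of functions of one variable and addition using
at most `N + 1` terms: `F (x, y) = ∑ i : Fin (N + 1), h i (f i x + g i y)`. -/
theorem function_superposition_odd (N : ℕ) (hodd : Odd N) (hN : 3 ≤ N)
    (F : ZMod N × ZMod N → ZMod N) :
    ∃ f g h : Fin (N + 1) → ZMod N → ZMod N,
      ∀ x y : ZMod N, F (x, y) = ∑ i, h i (f i x + g i y) := by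
  haveI : NeZero N := ⟨by omega⟩
  set r : ZMod N → ZMod N := fun x => ∑ y, F (x, y) with hr
  obtain ⟨fs, H, hHsum, hHf⟩ := zmod_factor hodd r
  obtain ⟨hs, hhs⟩ := zmod_telescope H hHsum
  set g0 : ZMod N → ZMod N := fun y => if y = 0 then 1 else 0 with hg0
  set F' : ZMod N → ZMod N → ZMod N :=
    fun x y => F (x, y) - hs (fs x + g0 y) with hF'
  have hrowt : ∀ x, ∑ y, hs (fs x + g0 y) = H (fs x) := by
    intro x
    have key : ∀ y : ZMod N, hs (fs x + g0 y)
        = hs (fs x) + (if y = 0 then H (fs x) else 0) := by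
      intro y
      by_cases hy : y = 0
      · simp [hg0, hy]
        exact hhs (fs x)
      · simp [hg0, hy]
    rw [Finset.sum_congr rfl (fun y _ => key y), Finset.sum_add_distrib,
      Finset.sum_ite_eq' Finset.univ (0 : ZMod N) (fun _ => H (fs x))]
    have hcard : ∑ _y : ZMod N, hs (fs x) = (N : ZMod N) * hs (fs x) := by
      rw [Finset.sum_const, Finset.card_univ, ZMod.card, nsmul_eq_mul]
    rw [hcard]
    simp [ZMod.natCast_self]
  have hrow : ∀ x, ∑ y, F' x y = 0 := by
    intro x
    simp only [hF']
    rw [Finset.sum_sub_distrib, hrowt, hHf]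
    simp [hr]
  set G : ZMod N → ZMod N → ZMod N := fun x y => F' x y - F' 0 y with hG
  have hGsum : ∀ x, ∑ y, G x y = 0 := by
    intro x
    simp only [hG]
    rw [Finset.sum_sub_distrib, hrow, hrow, sub_zero]
  have hDex : ∀ x : ZMod N, ∃ d : ZMod N → ZMod N, ∀ y, d (y + 1) = d y + G x y :=
    fun x => zmod_telescope _ (hGsum x)
  choose D hD using hDex
  set Sf : ZMod N → ZMod N := fun y => ∑ k ∈ Finset.Ico 1 N, D (k : ZMod N) y with hSf
  set ψ : ZMod N → ZMod N := fun y => F' 0 y - Sf y with hψ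
  refine ⟨fun i x => if (i : ℕ) = 0 then fs x else if (i : ℕ) = N then 0
      else (if x = ((i : ℕ) : ZMod N) then 1 else 0),
    fun i y => if (i : ℕ) = 0 then g0 y else y,
    fun i => if (i : ℕ) = 0 then hs else if (i : ℕ) = N then ψ
      else D (((i : ℕ) : ZMod N)),
    ?_⟩
  intro x y
  have hFin := Fin.sum_univ_eq_sum_range
    (fun k => (if k = 0 then hs else if k = N then ψ else D ((k : ZMod N)))
        ((if k = 0 then fs x else if k = N then 0
          else (if x = (k : ZMod N) then 1 else 0))
          + (if k = 0 then g0 y else y))) (N + 1)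
  beta_reduce at hFin ⊢
  rw [hFin, Finset.sum_range_succ]
  have hNne : N ≠ 0 := by omega
  simp only [hNne, if_false, if_pos rfl, if_neg hNne]
  have hsplit : Finset.range N = insert 0 (Finset.Ico 1 N) := by
    ext a
    simp only [Finset.mem_range, Finset.mem_insert, Finset.mem_Ico]
    omega
  rw [hsplit, Finset.sum_insert (by simp)]
  simp only [if_pos rfl]
  have hmid : ∑ k ∈ Finset.Ico 1 N,
      (if k = 0 then hs else if k = N then ψ else D ((k : ZMod N)))
        ((if k = 0 then fs x else if k = N then 0
          else (if x = (k : ZMod N) then 1 else 0))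
          + (if k = 0 then g0 y else y))
      = Sf y + G x y := by
    have step1 : ∀ k ∈ Finset.Ico 1 N,
        (if k = 0 then hs else if k = N then ψ else D ((k : ZMod N)))
          ((if k = 0 then fs x else if k = N then 0
            else (if x = (k : ZMod N) then 1 else 0))
            + (if k = 0 then g0 y else y))
        = D ((k : ZMod N)) y + (if x = (k : ZMod N) then G x y else 0) := by
      intro k hk
      obtain ⟨hk1, hk2⟩ := Finset.mem_Ico.mp hk
      have hk0 : k ≠ 0 := by omega
      have hkN : k ≠ N := by omega
      simp only [hk0, hkN, if_false]
      by_cases hx : x = (k : ZMod N)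
      · rw [if_pos hx, if_pos hx, add_comm (1 : ZMod N) y, hx, hD]
      · simp [hx]
    rw [Finset.sum_congr rfl step1, Finset.sum_add_distrib]
    congr 1
    by_cases hx0 : x = 0
    · have hzero : ∀ k ∈ Finset.Ico 1 N, (if x = (k : ZMod N) then G x y else 0) = 0 := by
        intro k hk
        obtain ⟨hk1, hk2⟩ := Finset.mem_Ico.mp hk
        have hxk : x ≠ (k : ZMod N) := by
          intro hcon
          have h1 : ((k : ℕ) : ZMod N) = 0 := by rw [← hcon, hx0]
          have h2 := (ZMod.natCast_eq_zero_iff k N).mp h1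
          have h3 := Nat.le_of_dvd (by omega) h2
          omega
        simp [hxk]
      rw [Finset.sum_eq_zero hzero]
      simp [hG, hx0]
    · rw [Finset.sum_eq_single x.val]
      · have hvx : ((x.val : ℕ) : ZMod N) = x := by simp [ZMod.natCast_val, ZMod.cast_id]
        simp [hvx]
      · intro k hk hkne
        obtain ⟨hk1, hk2⟩ := Finset.mem_Ico.mp hk
        have hxk : x ≠ (k : ZMod N) := by
          intro hcon
          apply hkne
          rw [hcon, ZMod.val_cast_of_lt hk2]
        simp [hxk]
      · intro hmem
        exfalso
        apply hmem
        rw [Finset.mem_Ico]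
        refine ⟨?_, ZMod.val_lt x⟩
        by_contra hlt
        push_neg at hlt
        have : x.val = 0 := by omega
        exact hx0 ((ZMod.val_eq_zero x).mp this)
  rw [hmid]
  simp only [hψ, hG, hF', if_true, zero_add]
  ring
end
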